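/- arXiv:1303.0916 — 5 statements merged into one kernel-verified Lean document; each statement's English description precedes it below -/
import Mathlib

section
/- In the mediated prisoner's dilemma with payoffs B < b < g < G (mutual cooperation gives g, mutual defection gives b, unilateral defection gives G to the defector and B to the cooperator), where the order of moves is uniformly random and the second mover is told to defect if and only if the first mover defected, full cooperation is a Nash equilibrium if and only if G - g ≤ g - b. -/
/-!
Against an obedient opponent, a deviation's payoff depends only on what the deviator plays
when told to cooperate. Obeying yields `g`; defecting yields `b` when he moves first (the
opponent is then told to defect) and `G` when he moves second, so `(G + b) / 2` on average.
-/

/-- Payoff of the row player in the prisoner's dilemma; `true` = cooperate (C). -/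
def pdU (B b g G : ℝ) : Bool → Bool → ℝ
  | true, true => g
  | true, false => B
  | false, true => G
  | false, false => b

/-- A strategy maps the recommendation received (`true` = "play C") to an action.
The mediator recommends C to the first mover; the second mover is recommended C
iff the first mover actually played C.  The order is uniformly random, so player 1's
expected payoff averages the two orders. -/
noncomputable def medEU1 (B b g G : ℝ) (s1 s2 : Bool → Bool) : ℝ :=
  (pdU B b g G (s1 true) (s2 (s1 true)) + pdU B b g G (s1 (s2 true)) (s2 true)) / 2

noncomputable def medEU2 (B b g G : ℝ) (s1 s2 : Bool → Bool) : ℝ :=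
  (pdU B b g G (s2 (s1 true)) (s1 true) + pdU B b g G (s2 true) (s1 (s2 true))) / 2

section

variable (B b g G : ℝ)

lemma medEU1_id_right (s : Bool → Bool) :
    medEU1 B b g G s id = if s true then g else (G + b) / 2 := by
  cases h : s true <;> simp [medEU1, pdU, h, add_comm]

lemma medEU2_id_left (s : Bool → Bool) :
    medEU2 B b g G id s = if s true then g else (G + b) / 2 := by
  cases h : s true <;> simp [medEU2, pdU, h]

end

lemma forall_ite_apply_true_le_iff {x g : ℝ} :
    (∀ s : Bool → Bool, (if s true then g else x) ≤ g) ↔ x ≤ g where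
  mp h := by simpa using h fun _ => false
  mpr h s := by split_ifs <;> linarith

theorem stmt0_general (B b g G : ℝ) :
    ((∀ s1' : Bool → Bool, medEU1 B b g G s1' id ≤ medEU1 B b g G id id) ∧
     (∀ s2' : Bool → Bool, medEU2 B b g G id s2' ≤ medEU2 B b g G id id)) ↔
    G - g ≤ g - b := by
  simp only [medEU1_id_right, medEU2_id_left, id, if_true, forall_ite_apply_true_le_iff,
    and_self]
  constructor <;> intro h <;> linarith

/-- Full cooperation (both players obey the mediator, i.e. strategy `id`) is a Nash
equilibrium of the mediated prisoner's dilemma iff `G - g ≤ g - b`. -/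
theorem stmt0 (B b g G : ℝ) (h1 : B < b) (h2 : b < g) (h3 : g < G) :
    ((∀ s1' : Bool → Bool, medEU1 B b g G s1' id ≤ medEU1 B b g G id id) ∧
     (∀ s2' : Bool → Bool, medEU2 B b g G id s2' ≤ medEU2 B b g G id id)) ↔
    G - g ≤ g - b :=
  stmt0_general B b g G
end

section
/- Every interdependent-choice equilibrium of a finite two-player game is individually rational: each player's expected payoff under α is at least his maximin value min over opponent actions of the max over own actions. -/
open Finset

/-! Against any action `a'` of player `i`, his payoff in the deviation term of the ICE
constraint is a convex combination of `u_i(a', ·)` and its minimum `w_i(a')`, hence at least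
`w_i(a')`. Summing the constraints over the recommended actions therefore bounds the expected
payoff below by `w_i(a')` for every `a'`, that is, by the maximin value. -/

section

variable {A B : Type} [Fintype A] [Fintype B] [Nonempty B]

theorem inf'_le_expected_of_incentive (u α θ : A → B → ℝ)
    (hα : ∀ a b, 0 ≤ α a b) (hsum : ∑ a, ∑ b, α a b = 1)
    (hθ : ∀ a b, 0 ≤ θ a b ∧ θ a b ≤ 1)
    (hinc : ∀ a a', 0 ≤ ∑ b, α a b *
      (u a b - (1 - θ a b) * u a' b - θ a b * univ.inf' univ_nonempty (u a'))) (a' : A) :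
    univ.inf' univ_nonempty (u a') ≤ ∑ a, ∑ b, α a b * u a b := by
  set w := univ.inf' univ_nonempty (u a')
  have hdev : ∀ a b, w ≤ (1 - θ a b) * u a' b + θ a b * w := fun a b => by
    have hw : w ≤ u a' b := inf'_le _ (mem_univ b)
    nlinarith [mul_nonneg (sub_nonneg.2 (hθ a b).2) (sub_nonneg.2 hw)]
  calc w = ∑ a, ∑ b, α a b * w := by simp only [← sum_mul, hsum, one_mul]
    _ ≤ ∑ a, ∑ b, α a b * ((1 - θ a b) * u a' b + θ a b * w) :=
      sum_le_sum fun a _ => sum_le_sum fun b _ => mul_le_mul_of_nonneg_left (hdev a b) (hα a b)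
    _ ≤ ∑ a, ∑ b, α a b * u a b := sub_nonneg.1 <| by
      simpa only [← sum_sub_distrib, ← mul_sub, sub_sub] using sum_nonneg fun a _ => hinc a a'

theorem maximin_le_expected_of_incentive [Nonempty A] (u α θ : A → B → ℝ)
    (hα : ∀ a b, 0 ≤ α a b) (hsum : ∑ a, ∑ b, α a b = 1)
    (hθ : ∀ a b, 0 ≤ θ a b ∧ θ a b ≤ 1)
    (hinc : ∀ a a', 0 ≤ ∑ b, α a b *
      (u a b - (1 - θ a b) * u a' b - θ a b * univ.inf' univ_nonempty (u a'))) :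
    univ.sup' univ_nonempty (fun a' => univ.inf' univ_nonempty (u a'))
      ≤ ∑ a, ∑ b, α a b * u a b :=
  sup'_le _ _ fun a' _ => inf'_le_expected_of_incentive u α θ hα hsum hθ hinc a'

end

/-- Every interdependent-choice equilibrium (w.r.t. the full action set) of a finite
two-player game is individually rational: each player's expected payoff is at least
his maximin value `max_{a_i'} min_{a_{-i}} u_i(a_i', a_{-i})`. -/
theorem stmt2 {A1 A2 : Type} [Fintype A1] [Fintype A2] [Nonempty A1] [Nonempty A2]
    (u1 u2 : A1 → A2 → ℝ) (α : A1 → A2 → ℝ)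
    (hpos : ∀ a1 a2, 0 ≤ α a1 a2)
    (hsum : ∑ a1, ∑ a2, α a1 a2 = 1)
    (hice : ∃ θ : A1 → A2 → ℝ, (∀ a1 a2, 0 ≤ θ a1 a2 ∧ θ a1 a2 ≤ 1) ∧
      (∀ a1 a1', 0 ≤ ∑ a2, α a1 a2 *
        (u1 a1 a2 - (1 - θ a1 a2) * u1 a1' a2
          - θ a1 a2 * univ.inf' univ_nonempty (fun b2 => u1 a1' b2))) ∧
      (∀ a2 a2', 0 ≤ ∑ a1, α a1 a2 *
        (u2 a1 a2 - θ a1 a2 * u2 a1 a2'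
          - (1 - θ a1 a2) * univ.inf' univ_nonempty (fun b1 => u2 b1 a2')))) :
    univ.sup' univ_nonempty (fun a1' => univ.inf' univ_nonempty (fun a2 => u1 a1' a2))
        ≤ ∑ a1, ∑ a2, α a1 a2 * u1 a1 a2 ∧
    univ.sup' univ_nonempty (fun a2' => univ.inf' univ_nonempty (fun a1 => u2 a1 a2'))
        ≤ ∑ a1, ∑ a2, α a1 a2 * u2 a1 a2 := by
  obtain ⟨θ, hθ, hinc1, hinc2⟩ := hice
  refine ⟨maximin_le_expected_of_incentive u1 α θ hpos hsum hθ hinc1, ?_⟩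
  -- Player 2 is player 1 of the transposed game, with `1 - θ` as the weight on his own minimum.
  rw [sum_comm (f := fun a1 a2 => α a1 a2 * u2 a1 a2)]
  refine maximin_le_expected_of_incentive (fun a2 a1 => u2 a1 a2) (fun a2 a1 => α a1 a2)
    (fun a2 a1 => 1 - θ a1 a2) (fun a2 a1 => hpos a1 a2) (by rwa [sum_comm])
    (fun a2 a1 => ⟨sub_nonneg.2 (hθ a1 a2).2, sub_le_self _ (hθ a1 a2).1⟩) fun a2 a2' => ?_
  simpa only [sub_sub_cancel] using hinc2 a2 a2'
end

section
/- The set of interdependent-choice equilibria with respect to a fixed set of credible threats B, when the worst-punishment levels are taken with respect to B ∪ (support of α) but all supports are constrained to lie in B, equals the projection onto Δ(A) of the set Γ(B) of joint distributions γ ∈ Δ(A × I) satisfying a finite system of affine inequalities, and hence is a convex compact polytope. -/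
/-!
An ICE `α` with first-mover weights `θ` corresponds to `γ(a,1) = α(a) θ(a)`,
`γ(a,2) = α(a) (1 - θ(a))`. Under this substitution the incentive constraints of `ICE(B)`
become, summand by summand, the affine constraints of `Γ(B)`; conversely every `γ ∈ Γ(B)`
arises this way, with `θ(a) = γ(a,1) / (γ(a,1) + γ(a,2))`. Hence `ICE(B)` is the image of
`Γ(B)` under the linear marginal map `γ ↦ γ(·,1) + γ(·,2)`. Being cut out by finitely many
closed affine conditions inside `[0,1]^(A × I)`, `Γ(B)` is convex and compact, and so is its
image.
-/

open Finset

variable {A1 A2 : Type}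

/-- The set of ICE distributions with respect to threat sets `B1, B2`, with supports
constrained to lie in `B` (so effective threats `B ∪ supp α = B`). -/
def iceSet [Fintype A1] [Fintype A2] (u1 u2 : A1 → A2 → ℝ)
    (B1 : Finset A1) (B2 : Finset A2) (h1 : B1.Nonempty) (h2 : B2.Nonempty) :
    Set (A1 × A2 → ℝ) :=
  {α | (∀ a, 0 ≤ α a) ∧ (∑ a, α a = 1) ∧
    (∀ a1 a2, α (a1, a2) ≠ 0 → a1 ∈ B1 ∧ a2 ∈ B2) ∧
    ∃ θ : A1 × A2 → ℝ, (∀ a, 0 ≤ θ a ∧ θ a ≤ 1) ∧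
      (∀ a1 a1', 0 ≤ ∑ a2, α (a1, a2) *
        (u1 a1 a2 - (1 - θ (a1, a2)) * u1 a1' a2
          - θ (a1, a2) * B2.inf' h2 (fun b2 => u1 a1' b2))) ∧
      (∀ a2 a2', 0 ≤ ∑ a1, α (a1, a2) *
        (u2 a1 a2 - θ (a1, a2) * u2 a1 a2'
          - (1 - θ (a1, a2)) * B1.inf' h1 (fun b1 => u2 b1 a2')))}

/-- The polytope `Γ(B)` of joint distributions over `A × I` (`γ a 0` is the weight on
player 1 moving first at profile `a`) satisfying the affine incentive inequalities,
with supports on `A` constrained to lie in `B`. -/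
def gammaSet [Fintype A1] [Fintype A2] (u1 u2 : A1 → A2 → ℝ)
    (B1 : Finset A1) (B2 : Finset A2) (h1 : B1.Nonempty) (h2 : B2.Nonempty) :
    Set (A1 × A2 → Fin 2 → ℝ) :=
  {γ | (∀ a i, 0 ≤ γ a i) ∧ (∑ a, (γ a 0 + γ a 1) = 1) ∧
    (∀ a1 a2, γ (a1, a2) 0 + γ (a1, a2) 1 ≠ 0 → a1 ∈ B1 ∧ a2 ∈ B2) ∧
    (∀ a1 a1', 0 ≤ ∑ a2, ((γ (a1, a2) 0 + γ (a1, a2) 1) * u1 a1 a2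
        - γ (a1, a2) 0 * B2.inf' h2 (fun b2 => u1 a1' b2)
        - γ (a1, a2) 1 * u1 a1' a2)) ∧
    (∀ a2 a2', 0 ≤ ∑ a1, ((γ (a1, a2) 0 + γ (a1, a2) 1) * u2 a1 a2
        - γ (a1, a2) 1 * B1.inf' h1 (fun b1 => u2 b1 a2')
        - γ (a1, a2) 0 * u2 a1 a2'))}


namespace ICE

section Split

variable {α : Type*}

def marginal : (α → Fin 2 → ℝ) →ₗ[ℝ] (α → ℝ) where
  toFun γ a := γ a 0 + γ a 1
  map_add' x y := funext fun a => by simp only [Pi.add_apply]; ring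
  map_smul' r x := funext fun a => by simp only [Pi.smul_apply, smul_eq_mul, RingHom.id_apply]; ring

@[simp]
lemma marginal_apply (γ : α → Fin 2 → ℝ) (a : α) : marginal γ a = γ a 0 + γ a 1 := rfl

def splitBy (p θ : α → ℝ) : α → Fin 2 → ℝ := fun a => ![p a * θ a, p a * (1 - θ a)]

@[simp]
lemma splitBy_apply_zero (p θ : α → ℝ) (a : α) : splitBy p θ a 0 = p a * θ a := rfl

@[simp]
lemma splitBy_apply_one (p θ : α → ℝ) (a : α) : splitBy p θ a 1 = p a * (1 - θ a) := rfl

lemma marginal_splitBy (p θ : α → ℝ) : marginal (splitBy p θ) = p :=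
  funext fun a => by simp only [marginal_apply, splitBy_apply_zero, splitBy_apply_one]; ring

lemma splitBy_nonneg_iff {p θ : α → ℝ} (hθ : ∀ a, θ a ∈ Set.Icc 0 1) :
    (∀ a i, 0 ≤ splitBy p θ a i) ↔ ∀ a, 0 ≤ p a := by
  refine ⟨fun h a => ?_, fun h a i => ?_⟩
  · simpa only [← marginal_apply, marginal_splitBy] using add_nonneg (h a 0) (h a 1)
  · have := hθ a
    fin_cases i
    · exact mul_nonneg (h a) this.1
    · exact mul_nonneg (h a) (sub_nonneg.2 this.2)

-- Equals `0` where `γ a` vanishes (`x / 0 = 0`); any value would do there.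
noncomputable def firstShare (γ : α → Fin 2 → ℝ) (a : α) : ℝ := γ a 0 / marginal γ a

variable {γ : α → Fin 2 → ℝ}

lemma firstShare_mem_Icc (hγ : ∀ a i, 0 ≤ γ a i) (a : α) : firstShare γ a ∈ Set.Icc 0 1 :=
  have hmass : 0 ≤ marginal γ a := add_nonneg (hγ a 0) (hγ a 1)
  ⟨div_nonneg (hγ a 0) hmass, div_le_one_of_le₀ (le_add_of_nonneg_right (hγ a 1)) hmass⟩

lemma splitBy_marginal_firstShare (hγ : ∀ a i, 0 ≤ γ a i) :
    splitBy (marginal γ) (firstShare γ) = γ := by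
  have h0 : ∀ a, marginal γ a * firstShare γ a = γ a 0 := fun a => by
    rw [mul_comm]
    refine div_mul_cancel_of_imp fun h => ?_
    linarith [hγ a 0, hγ a 1, marginal_apply γ a]
  funext a
  rw [funext_iff, Fin.forall_fin_two, splitBy_apply_zero, splitBy_apply_one, mul_one_sub, h0]
  exact ⟨rfl, add_sub_cancel_left _ _⟩

end Split

lemma isLinearMap_sum_incentive {ι α : Type*} (s : Finset ι) (p : ι → α) (i j : Fin 2)
    (c d e : ι → ℝ) :
    IsLinearMap ℝ fun γ : α → Fin 2 → ℝ =>
      ∑ k ∈ s, ((γ (p k) 0 + γ (p k) 1) * c k - γ (p k) i * d k - γ (p k) j * e k) where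
  map_add x y := by
    simp only [Pi.add_apply, ← sum_add_distrib]
    exact sum_congr rfl fun _ _ => by ring
  map_smul r x := by
    simp only [Pi.smul_apply, smul_eq_mul, mul_sum]
    exact sum_congr rfl fun _ _ => by ring

section Gamma

variable [Fintype A1] [Fintype A2] (u1 u2 : A1 → A2 → ℝ) (B1 : Finset A1) (B2 : Finset A2)
  (h1 : B1.Nonempty) (h2 : B2.Nonempty)

theorem splitBy_mem_gammaSet_iff {p θ : A1 × A2 → ℝ} (hθ : ∀ a, θ a ∈ Set.Icc 0 1) :
    splitBy p θ ∈ gammaSet u1 u2 B1 B2 h1 h2 ↔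
      (∀ a, 0 ≤ p a) ∧ (∑ a, p a = 1) ∧
      (∀ a1 a2, p (a1, a2) ≠ 0 → a1 ∈ B1 ∧ a2 ∈ B2) ∧
      (∀ a1 a1', 0 ≤ ∑ a2, p (a1, a2) *
        (u1 a1 a2 - (1 - θ (a1, a2)) * u1 a1' a2
          - θ (a1, a2) * B2.inf' h2 (fun b2 => u1 a1' b2))) ∧
      (∀ a2 a2', 0 ≤ ∑ a1, p (a1, a2) *
        (u2 a1 a2 - θ (a1, a2) * u2 a1 a2'
          - (1 - θ (a1, a2)) * B1.inf' h1 (fun b1 => u2 b1 a2'))) := by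
  have hmass : ∀ a, splitBy p θ a 0 + splitBy p θ a 1 = p a :=
    congrFun (marginal_splitBy p θ)
  simp only [gammaSet, Set.mem_ofPred_eq, hmass]
  simp only [splitBy_apply_zero, splitBy_apply_one]
  refine and_congr (splitBy_nonneg_iff hθ) (and_congr Iff.rfl (and_congr Iff.rfl
    (and_congr (forall₂_congr fun _ _ => ?_) (forall₂_congr fun _ _ => ?_))))
  all_goals exact Iff.of_eq (congrArg _ (sum_congr rfl fun _ _ => by ring))

theorem mem_iceSet_iff {p : A1 × A2 → ℝ} :
    p ∈ iceSet u1 u2 B1 B2 h1 h2 ↔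
      ∃ θ, (∀ a, θ a ∈ Set.Icc 0 1) ∧ splitBy p θ ∈ gammaSet u1 u2 B1 B2 h1 h2 := by
  constructor
  · rintro ⟨hp, hsum, hsupp, θ, hθ, hinc1, hinc2⟩
    exact ⟨θ, hθ, (splitBy_mem_gammaSet_iff u1 u2 B1 B2 h1 h2 hθ).2
      ⟨hp, hsum, hsupp, hinc1, hinc2⟩⟩
  · rintro ⟨θ, hθ, hsplit⟩
    obtain ⟨hp, hsum, hsupp, hinc1, hinc2⟩ :=
      (splitBy_mem_gammaSet_iff u1 u2 B1 B2 h1 h2 hθ).1 hsplit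
    exact ⟨hp, hsum, hsupp, θ, hθ, hinc1, hinc2⟩

theorem iceSet_eq_image_marginal :
    iceSet u1 u2 B1 B2 h1 h2 = marginal '' gammaSet u1 u2 B1 B2 h1 h2 := by
  ext p
  rw [mem_iceSet_iff]
  constructor
  · rintro ⟨θ, -, hsplit⟩
    exact ⟨_, hsplit, marginal_splitBy p θ⟩
  · rintro ⟨γ, hγ, rfl⟩
    refine ⟨firstShare γ, firstShare_mem_Icc hγ.1, ?_⟩
    rwa [splitBy_marginal_firstShare hγ.1]

theorem convex_gammaSet : Convex ℝ (gammaSet u1 u2 B1 B2 h1 h2) := by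
  simp only [gammaSet, Set.ofPred_and, Set.ofPred_forall]
  refine .inter ?_ (.inter ?_ (.inter ?_ (.inter ?_ ?_)))
  · exact convex_iInter fun a => convex_iInter fun i =>
      convex_halfSpace_ge (f := fun γ : A1 × A2 → Fin 2 → ℝ => γ a i)
        ⟨fun _ _ => rfl, fun _ _ => rfl⟩ 0
  · exact convex_hyperplane (f := fun γ => ∑ a, marginal γ a)
      ⟨fun x y => by simp only [map_add, Pi.add_apply, sum_add_distrib],
        fun r x => by simp only [map_smul, Pi.smul_apply, smul_eq_mul, mul_sum]⟩ 1
  · refine convex_iInter fun a1 => convex_iInter fun a2 => ?_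
    by_cases hB : a1 ∈ B1 ∧ a2 ∈ B2
    · simp only [hB, and_self, imp_true_iff, Set.ofPred_true]
      exact convex_univ
    · simp only [hB, imp_false, not_not]
      exact convex_hyperplane (f := fun γ : A1 × A2 → Fin 2 → ℝ => marginal γ (a1, a2))
          ⟨fun x y => by rw [map_add]; rfl, fun r x => by rw [map_smul]; rfl⟩ 0
  · exact convex_iInter fun a1 => convex_iInter fun a1' => convex_halfSpace_ge
      (isLinearMap_sum_incentive univ (fun a2 => (a1, a2)) 0 1 (u1 a1)
        (fun _ => B2.inf' h2 (fun b2 => u1 a1' b2)) (u1 a1')) 0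
  · exact convex_iInter fun a2 => convex_iInter fun a2' => convex_halfSpace_ge
      (isLinearMap_sum_incentive univ (fun a1 => (a1, a2)) 1 0 (u2 · a2)
        (fun _ => B1.inf' h1 (fun b1 => u2 b1 a2')) (u2 · a2')) 0

theorem isClosed_gammaSet : IsClosed (gammaSet u1 u2 B1 B2 h1 h2) := by
  simp only [gammaSet, Set.ofPred_and, Set.ofPred_forall]
  refine .inter ?_ (.inter ?_ (.inter ?_ (.inter ?_ ?_)))
  · exact isClosed_iInter fun a => isClosed_iInter fun i =>
      isClosed_le continuous_const (by fun_prop)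
  · exact isClosed_eq (by fun_prop) continuous_const
  · refine isClosed_iInter fun a1 => isClosed_iInter fun a2 => ?_
    simp only [imp_iff_not_or, not_not, Set.ofPred_or]
    exact (isClosed_eq (by fun_prop) continuous_const).union isClosed_const
  · exact isClosed_iInter fun a1 => isClosed_iInter fun a1' =>
      isClosed_le continuous_const (by fun_prop)
  · exact isClosed_iInter fun a2 => isClosed_iInter fun a2' =>
      isClosed_le continuous_const (by fun_prop)

theorem gammaSet_subset_Icc : gammaSet u1 u2 B1 B2 h1 h2 ⊆ Set.Icc 0 1 := by
  rintro γ ⟨hγ, hsum, -⟩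
  refine ⟨fun a i => hγ a i, fun a i => ?_⟩
  calc γ a i ≤ ∑ j, γ a j := single_le_sum (fun j _ => hγ a j) (mem_univ i)
    _ = marginal γ a := Fin.sum_univ_two _
    _ ≤ ∑ b, marginal γ b :=
      single_le_sum (fun b _ => add_nonneg (hγ b 0) (hγ b 1)) (mem_univ a)
    _ = 1 := hsum

theorem isCompact_gammaSet : IsCompact (gammaSet u1 u2 B1 B2 h1 h2) :=
  isCompact_Icc.of_isClosed_subset (isClosed_gammaSet u1 u2 B1 B2 h1 h2)
    (gammaSet_subset_Icc u1 u2 B1 B2 h1 h2)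

end Gamma

end ICE

theorem stmt3_general [Fintype A1] [Fintype A2]
    (u1 u2 : A1 → A2 → ℝ) (B1 : Finset A1) (B2 : Finset A2)
    (h1 : B1.Nonempty) (h2 : B2.Nonempty) :
    iceSet u1 u2 B1 B2 h1 h2 =
      {α | ∃ γ ∈ gammaSet u1 u2 B1 B2 h1 h2, ∀ a, α a = γ a 0 + γ a 1} ∧
    Convex ℝ (iceSet u1 u2 B1 B2 h1 h2) ∧
    IsCompact (iceSet u1 u2 B1 B2 h1 h2) := by
  rw [ICE.iceSet_eq_image_marginal]
  refine ⟨?_, (ICE.convex_gammaSet u1 u2 B1 B2 h1 h2).linear_image ICE.marginal,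
    (ICE.isCompact_gammaSet u1 u2 B1 B2 h1 h2).image
      ICE.marginal.continuous_of_finiteDimensional⟩
  ext p
  simp only [Set.mem_image, Set.mem_ofPred_eq, funext_iff, ICE.marginal_apply, eq_comm]

/-- `ICE(B)` is exactly the projection of `Γ(B)` onto `Δ(A)`, and is a convex
compact set (a polytope cut out by finitely many affine inequalities). -/
theorem stmt3 [Fintype A1] [Fintype A2] [Nonempty A1] [Nonempty A2]
    (u1 u2 : A1 → A2 → ℝ) (B1 : Finset A1) (B2 : Finset A2)
    (h1 : B1.Nonempty) (h2 : B2.Nonempty) :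
    iceSet u1 u2 B1 B2 h1 h2 =
      {α | ∃ γ ∈ gammaSet u1 u2 B1 B2 h1 h2, ∀ a, α a = γ a 0 + γ a 1} ∧
    Convex ℝ (iceSet u1 u2 B1 B2 h1 h2) ∧
    IsCompact (iceSet u1 u2 B1 B2 h1 h2) :=
  stmt3_general u1 u2 B1 B2 h1 h2
end

section
/- An action a_i is counterfactually rationalizable with respect to an action subspace A' if and only if it is not absolutely dominated in A': there is no action b_i with min_{a_{-i} ∈ A'_{-i}} u_i(b_i, a_{-i}) > max_{a_{-i} ∈ A'_{-i}} u_i(a_i, a_{-i}). -/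
open Finset

section ConvexCombination

variable {ι R : Type*} [Semiring R] [LinearOrder R] [IsOrderedRing R]
  {s : Finset ι} (hs : s.Nonempty) (f : ι → R) {w : ι → R}

theorem Finset.sum_mul_le_sup'_of_sum_eq_one (hw : ∀ i ∈ s, 0 ≤ w i)
    (hsum : ∑ i ∈ s, w i = 1) : ∑ i ∈ s, f i * w i ≤ s.sup' hs f :=
  calc ∑ i ∈ s, f i * w i ≤ ∑ i ∈ s, s.sup' hs f * w i :=
        sum_le_sum fun i hi => mul_le_mul_of_nonneg_right (le_sup' f hi) (hw i hi)
    _ = s.sup' hs f := by rw [← mul_sum, hsum, mul_one]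

theorem Finset.inf'_le_sum_mul_of_sum_eq_one (hw : ∀ i ∈ s, 0 ≤ w i)
    (hsum : ∑ i ∈ s, w i = 1) : s.inf' hs f ≤ ∑ i ∈ s, f i * w i :=
  calc s.inf' hs f = ∑ i ∈ s, s.inf' hs f * w i := by rw [← mul_sum, hsum, mul_one]
    _ ≤ ∑ i ∈ s, f i * w i :=
        sum_le_sum fun i hi => mul_le_mul_of_nonneg_right (inf'_le f hi) (hw i hi)

end ConvexCombination

theorem stmt7_general {A1 A2 : Type}
    (u1 : A1 → A2 → ℝ) (A2' : Finset A2) (h2 : A2'.Nonempty) (a1s : A1) :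
    (∃ lam : A1 → A2 → ℝ,
      (∀ a1 a2, 0 ≤ lam a1 a2) ∧ (∀ a1, ∑ a2 ∈ A2', lam a1 a2 = 1) ∧
      (∀ a1, ∑ a2 ∈ A2', u1 a1 a2 * lam a1 a2 ≤ ∑ a2 ∈ A2', u1 a1s a2 * lam a1s a2))
    ↔ ¬ ∃ b1 : A1, A2'.sup' h2 (fun a2 => u1 a1s a2) < A2'.inf' h2 (fun a2 => u1 b1 a2) := by
  classical
  constructor
  · rintro ⟨lam, hpos, hsum, hbest⟩ ⟨b1, hb⟩
    have hb1 := inf'_le_sum_mul_of_sum_eq_one h2 (u1 b1) (fun a2 _ => hpos b1 a2) (hsum b1)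
    have ha1s := sum_mul_le_sup'_of_sum_eq_one h2 (u1 a1s) (fun a2 _ => hpos a1s a2) (hsum a1s)
    exact hb.not_ge (hb1.trans ((hbest b1).trans ha1s))
  · intro hnd
    simp only [not_exists, not_lt] at hnd
    obtain ⟨cmax, hcmax, hmax⟩ := exists_mem_eq_sup' h2 (u1 a1s)
    choose cmin hcmin hmin using fun a1 => exists_mem_eq_inf' h2 (u1 a1)
    -- `a1s` believes in its best outcome, every other action in its worst one.
    let c : A1 → A2 := Function.update cmin a1s cmax
    have hc : ∀ a1, c a1 ∈ A2' := by
      intro a1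
      by_cases h : a1 = a1s
      · simpa [c, h] using hcmax
      · simpa [c, h] using hcmin a1
    have hpoint : ∀ (a1 : A1) (f : A2 → ℝ),
        ∑ a2 ∈ A2', f a2 * (if a2 = c a1 then 1 else 0) = f (c a1) := by
      intro a1 f
      simp [mul_ite, hc a1]
    refine ⟨fun a1 a2 => if a2 = c a1 then 1 else 0, fun _ _ => by positivity,
      fun a1 => by simpa using hpoint a1 1, fun a1 => ?_⟩
    simp only [hpoint]
    by_cases h : a1 = a1s
    · rw [h]
    · simp only [c, Function.update_of_ne h, Function.update_self]
      rw [← hmin, ← hmax]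
      exact hnd a1

/-- An action `a1s` is counterfactually rationalizable with respect to a (nonempty)
action subspace `A1 × A2'` — i.e. a best response to some counterfactual belief
`λ : A1 → Δ(A2')` — iff no action `b1` absolutely dominates it in `A2'`:
`min_{a2 ∈ A2'} u1 b1 a2 > max_{a2 ∈ A2'} u1 a1s a2`. -/
theorem stmt7 {A1 A2 : Type} [Fintype A1]
    (u1 : A1 → A2 → ℝ) (A2' : Finset A2) (h2 : A2'.Nonempty) (a1s : A1) :
    (∃ lam : A1 → A2 → ℝ,
      (∀ a1 a2, 0 ≤ lam a1 a2) ∧ (∀ a1, ∑ a2 ∈ A2', lam a1 a2 = 1) ∧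
      (∀ a1, ∑ a2 ∈ A2', u1 a1 a2 * lam a1 a2 ≤ ∑ a2 ∈ A2', u1 a1s a2 * lam a1s a2))
    ↔ ¬ ∃ b1 : A1, A2'.sup' h2 (fun a2 => u1 a1s a2) < A2'.inf' h2 (fun a2 => u1 b1 a2) :=
  stmt7_general u1 A2' h2 a1s
end

section
/- In a generic 2×2 environment (no repeated payoffs for either player), if some player has an absolutely dominated action, then there is a unique interdependent-choice equilibrium with respect to the set of C-rationalizable profiles: the point mass on the profile where that player plays his absolutely dominant action and the opponent plays the unique best response to it. -/
open Finset

/-- `b1` absolutely dominates `a1` within opponent subspace `S2` (player 1). -/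
def AbsDomIn1 (u1 : Bool → Bool → ℝ) (S2 : Set Bool) (b1 a1 : Bool) : Prop :=
  ∀ c2 ∈ S2, ∀ d2 ∈ S2, u1 a1 c2 < u1 b1 d2

/-- `b2` absolutely dominates `a2` within opponent subspace `S1` (player 2). -/
def AbsDomIn2 (u2 : Bool → Bool → ℝ) (S1 : Set Bool) (b2 a2 : Bool) : Prop :=
  ∀ c1 ∈ S1, ∀ d1 ∈ S1, u2 c1 a2 < u2 d1 b2

/-- The actions not absolutely dominated within `S` (the C-rationalizable ones). -/
def CRop (u1 u2 : Bool → Bool → ℝ) (S : Set Bool × Set Bool) :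
    Set Bool × Set Bool :=
  ({a1 | ¬ ∃ b1, AbsDomIn1 u1 S.2 b1 a1}, {a2 | ¬ ∃ b2, AbsDomIn2 u2 S.1 b2 a2})

/-- The largest self-C-rationalizable set `A^CR`. -/
def ACR (u1 u2 : Bool → Bool → ℝ) : Set Bool × Set Bool :=
  ({a1 | ∃ S, S ≤ CRop u1 u2 S ∧ a1 ∈ S.1}, {a2 | ∃ S, S ≤ CRop u1 u2 S ∧ a2 ∈ S.2})

/-- Supports of the marginals. -/
def msupp1 (α : Bool × Bool → ℝ) : Set Bool := {a1 | ∃ a2, α (a1, a2) ≠ 0}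
def msupp2 (α : Bool × Bool → ℝ) : Set Bool := {a2 | ∃ a1, α (a1, a2) ≠ 0}

/-- `α` is an ICE with respect to threats `B` (effective threats `B ∪ supp α`). -/
noncomputable def IceCond (u1 u2 : Bool → Bool → ℝ) (B : Set Bool × Set Bool)
    (α : Bool × Bool → ℝ) : Prop :=
  (∀ a, 0 ≤ α a) ∧ (∑ a, α a = 1) ∧
  ∃ θ : Bool × Bool → ℝ, (∀ a, 0 ≤ θ a ∧ θ a ≤ 1) ∧
    (∀ a1 a1' : Bool, 0 ≤ ∑ a2, α (a1, a2) *
      (u1 a1 a2 - (1 - θ (a1, a2)) * u1 a1' a2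
        - θ (a1, a2) * sInf ((fun a2 => u1 a1' a2) '' (B.2 ∪ msupp2 α)))) ∧
    (∀ a2 a2' : Bool, 0 ≤ ∑ a1, α (a1, a2) *
      (u2 a1 a2 - θ (a1, a2) * u2 a1 a2'
        - (1 - θ (a1, a2)) * sInf ((fun a1 => u2 a1 a2') '' (B.1 ∪ msupp1 α))))

/-! Let `A₁` absolutely dominate `!A₁` and let `A₂` be player 2's strict best response to `A₁`.
An absolutely dominated action is never C-rationalizable, so `(A^CR).1 = {A₁}`. In an ICE,
player 1's constraint against deviating from `!A₁` to `A₁` is a sum of `α`-weighted terms that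
are all strictly negative (both the payoff of `A₁` and its worst punishment exceed every payoff
of `!A₁`), so `α` puts no mass on `!A₁`. Player 2 then can only be punished by `A₁`, and her
constraint against deviating from `!A₂` to `A₂` removes the mass on `(A₁, !A₂)`. Conversely,
the point mass on a pure Nash equilibrium is an ICE with `θ = 0`, because worst punishments never
exceed the actual payoffs of a deviation. A dominated action of player 2 is handled by exchanging
the players. -/

lemma lt_convex_combo {c a b t : ℝ} (h0 : 0 ≤ t) (h1 : t ≤ 1) (ha : c < a) (hb : c < b) :
    c < (1 - t) * a + t * b := by
  have hm : c < min a b := lt_min ha hb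
  nlinarith [mul_le_mul_of_nonneg_left (min_le_left a b) (sub_nonneg.2 h1),
    mul_le_mul_of_nonneg_left (min_le_right a b) h0]

lemma lt_csInf_image_of_finite {β : Type*} {f : β → ℝ} {s : Set β} {c : ℝ}
    (hs : s.Finite) (hne : s.Nonempty) (h : ∀ x ∈ s, c < f x) : c < sInf (f '' s) := by
  obtain ⟨x, hx, hfx⟩ := (hne.image f).csInf_mem (hs.image f)
  exact hfx ▸ h x hx

lemma eq_zero_of_sum_mul_nonneg {ι : Type*} [Fintype ι] {w g : ι → ℝ} (hw : ∀ i, 0 ≤ w i)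
    (hg : ∀ i, w i ≠ 0 → g i < 0) (h : 0 ≤ ∑ i, w i * g i) (i : ι) : w i = 0 := by
  have hle : ∀ j ∈ Finset.univ, w j * g j ≤ 0 := fun j _ => by
    by_cases hj : w j = 0
    · simp [hj]
    · exact mul_nonpos_of_nonneg_of_nonpos (hw j) (hg j hj).le
  have hzero := (Finset.sum_eq_zero_iff_of_nonpos hle).1
    (le_antisymm (Finset.sum_nonpos hle) h) i (Finset.mem_univ i)
  by_contra hi
  exact (mul_ne_zero hi (hg i hi).ne) hzero

lemma eq_indicator_of_sum_eq_one {ι : Type*} [Fintype ι] [DecidableEq ι] {α : ι → ℝ} {i₀ : ι}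
    (hsum : ∑ i, α i = 1) (h : ∀ i ≠ i₀, α i = 0) : α = fun i => if i = i₀ then 1 else 0 := by
  rw [Fintype.sum_eq_single i₀ h] at hsum
  funext i
  split_ifs with hi
  · exact hi ▸ hsum
  · exact h i hi

lemma Bool.exists_apply_not_lt_of_injective {f : Bool → ℝ} (hf : Function.Injective f) :
    ∃ b, f (!b) < f b := by
  rcases lt_or_gt_of_ne (hf.ne (by decide : true ≠ false)) with h | h
  · exact ⟨false, h⟩
  · exact ⟨true, h⟩

lemma Bool.apply_le_of_apply_not_lt {f : Bool → ℝ} {a : Bool} (h : f (!a) < f a) (b : Bool) :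
    f b ≤ f a := by
  rcases Bool.eq_or_eq_not b a with rfl | rfl
  exacts [le_rfl, h.le]

section

variable {u1 u2 : Bool → Bool → ℝ}

lemma AbsDomIn1.mono {S T : Set Bool} {b a : Bool} (h : AbsDomIn1 u1 T b a) (hST : S ⊆ T) :
    AbsDomIn1 u1 S b a :=
  fun c hc d hd => h c (hST hc) d (hST hd)

lemma AbsDomIn2.mono {S T : Set Bool} {b a : Bool} (h : AbsDomIn2 u2 T b a) (hST : S ⊆ T) :
    AbsDomIn2 u2 S b a :=
  fun c hc d hd => h c (hST hc) d (hST hd)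

lemma AbsDomIn1.eq_not {S : Set Bool} {a b : Bool} (h : AbsDomIn1 u1 S a b) (hS : S.Nonempty) :
    b = !a := by
  obtain ⟨c, hc⟩ := hS
  rcases Bool.eq_or_eq_not b a with rfl | hb
  exacts [absurd (h c hc c hc) (lt_irrefl _), hb]

lemma AbsDomIn2.eq_not {S : Set Bool} {a b : Bool} (h : AbsDomIn2 u2 S a b) (hS : S.Nonempty) :
    b = !a := by
  obtain ⟨c, hc⟩ := hS
  rcases Bool.eq_or_eq_not b a with rfl | hb
  exacts [absurd (h c hc c hc) (lt_irrefl _), hb]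

lemma ACR_fst_subset_of_absDomIn1 {a : Bool} (h : AbsDomIn1 u1 Set.univ a (!a)) :
    (ACR u1 u2).1 ⊆ {a} := by
  rintro x ⟨S, hS, hxS⟩
  obtain rfl | rfl := Bool.eq_or_eq_not x a
  exacts [rfl, absurd ⟨a, h.mono (Set.subset_univ _)⟩ (hS.1 hxS)]

lemma ACR_snd_subset_of_absDomIn2 {a : Bool} (h : AbsDomIn2 u2 Set.univ a (!a)) :
    (ACR u1 u2).2 ⊆ {a} := by
  rintro x ⟨S, hS, hxS⟩
  obtain rfl | rfl := Bool.eq_or_eq_not x a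
  exacts [rfl, absurd ⟨a, h.mono (Set.subset_univ _)⟩ (hS.2 hxS)]

lemma msupp2_nonempty {α : Bool × Bool → ℝ} (hsum : ∑ a, α a = 1) : (msupp2 α).Nonempty := by
  by_contra h
  have hzero : ∀ a, α a = 0 := fun a => by
    by_contra ha
    exact h ⟨a.2, a.1, ha⟩
  simp [hzero] at hsum

lemma msupp1_comp_swap (α : Bool × Bool → ℝ) : msupp1 (α ∘ Prod.swap) = msupp2 α := rfl

lemma msupp2_comp_swap (α : Bool × Bool → ℝ) : msupp2 (α ∘ Prod.swap) = msupp1 α := rfl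

lemma IceCond.swap {B : Set Bool × Set Bool} {α : Bool × Bool → ℝ} (h : IceCond u1 u2 B α) :
    IceCond (fun x y => u2 y x) (fun x y => u1 y x) B.swap (α ∘ Prod.swap) := by
  obtain ⟨hpos, hsum, θ, hθ, hI1, hI2⟩ := h
  refine ⟨fun p => hpos _, ?_, fun p => 1 - θ p.swap,
    fun p => ⟨by linarith [(hθ p.swap).2], by linarith [(hθ p.swap).1]⟩,
    fun a1 a1' => ?_, fun a2 a2' => ?_⟩
  · exact (Fintype.sum_equiv (Equiv.prodComm Bool Bool) _ α fun _ => rfl).trans hsum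
  · refine (hI2 a1 a1').trans_eq (Finset.sum_congr rfl fun x _ => ?_)
    simp only [Function.comp_apply, Prod.swap_prod_mk, Prod.snd_swap, msupp2_comp_swap]
    ring
  · refine (hI1 a2 a2').trans_eq (Finset.sum_congr rfl fun x _ => ?_)
    simp only [Function.comp_apply, Prod.swap_prod_mk, Prod.fst_swap, msupp1_comp_swap]
    ring

lemma iceCond_of_isNash {B : Set Bool × Set Bool} {A1 A2 : Bool}
    (h1 : ∀ b1, u1 b1 A2 ≤ u1 A1 A2) (h2 : ∀ b2, u2 A1 b2 ≤ u2 A1 A2) :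
    IceCond u1 u2 B (fun a => if a = (A1, A2) then 1 else 0) := by
  refine ⟨fun a => by dsimp only; split_ifs <;> norm_num, by simp, 0,
    fun _ => ⟨le_rfl, zero_le_one⟩, fun a1 a1' => ?_, fun a2 a2' => ?_⟩
  · by_cases ha : a1 = A1
    · subst ha
      rw [Fintype.sum_eq_single A2 fun x hx => by simp [hx]]
      dsimp only [Pi.zero_apply]
      rw [if_pos rfl]
      linarith [h1 a1']
    · simp [ha]
  · by_cases ha : a2 = A2
    · subst ha
      have hpunish : sInf ((fun a1 => u2 a1 a2') ''
          (B.1 ∪ msupp1 fun a => if a = (A1, a2) then (1 : ℝ) else 0)) ≤ u2 A1 a2' :=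
        csInf_le ((Set.toFinite _).image _).bddBelow ⟨A1, Or.inr ⟨a2, by simp⟩, rfl⟩
      rw [Fintype.sum_eq_single A1 fun x hx => by simp [hx]]
      dsimp only [Pi.zero_apply]
      rw [if_pos rfl]
      linarith [h2 a2']
    · simp [ha]

lemma IceCond.eq_indicator_of_absDom {B : Set Bool × Set Bool} {α : Bool × Bool → ℝ}
    {A1 A2 : Bool} (h : IceCond u1 u2 B α) (hD : ∀ c d, u1 (!A1) c < u1 A1 d)
    (hBR : u2 A1 (!A2) < u2 A1 A2) (hB : B.1 ⊆ {A1}) :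
    α = fun a => if a = (A1, A2) then 1 else 0 := by
  obtain ⟨hpos, hsum, θ, hθ, hI1, hI2⟩ := h
  have hdominated : ∀ a2, α (!A1, a2) = 0 := by
    refine eq_zero_of_sum_mul_nonneg (fun _ => hpos _) (fun a2 _ => ?_) (hI1 (!A1) A1)
    have hpunish : u1 (!A1) a2 < sInf ((fun d => u1 A1 d) '' (B.2 ∪ msupp2 α)) :=
      lt_csInf_image_of_finite (Set.toFinite _) ⟨_, Or.inr (msupp2_nonempty hsum).some_mem⟩
        fun d _ => hD a2 d
    linarith [lt_convex_combo (hθ (!A1, a2)).1 (hθ (!A1, a2)).2 (hD a2 a2) hpunish]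
  have hsupp : B.1 ∪ msupp1 α ⊆ {A1} := Set.union_subset hB fun x ⟨a2, hx⟩ =>
    (Bool.eq_or_eq_not x A1).resolve_right fun hx' => hx (hx' ▸ hdominated a2)
  have hunprofitable : ∀ a1, α (a1, !A2) = 0 := by
    refine eq_zero_of_sum_mul_nonneg (fun _ => hpos _) (fun a1 ha1 => ?_) (hI2 (!A2) A2)
    obtain rfl : a1 = A1 := hsupp (Or.inr ⟨_, ha1⟩)
    have hpunish : u2 a1 (!A2) < sInf ((fun x => u2 x A2) '' (B.1 ∪ msupp1 α)) :=
      lt_csInf_image_of_finite (Set.toFinite _) ⟨_, Or.inr ⟨_, ha1⟩⟩ fun x hx => by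
        rw [Set.mem_singleton_iff.1 (hsupp hx)]
        exact hBR
    have hθ' := hθ (a1, !A2)
    linarith [lt_convex_combo (t := 1 - θ (a1, !A2)) (by linarith) (by linarith) hBR hpunish]
  refine eq_indicator_of_sum_eq_one hsum fun ⟨a1, a2⟩ ha => ?_
  rcases Bool.eq_or_eq_not a1 A1 with rfl | rfl
  · rcases Bool.eq_or_eq_not a2 A2 with rfl | rfl
    · exact absurd rfl ha
    · exact hunprofitable _
  · exact hdominated _

lemma iceCond_ACR_iff_of_absDomIn1 {A1 A2 : Bool} (hdom : AbsDomIn1 u1 Set.univ A1 (!A1))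
    (hBR : u2 A1 (!A2) < u2 A1 A2) (α : Bool × Bool → ℝ) :
    IceCond u1 u2 (ACR u1 u2) α ↔ α = fun a => if a = (A1, A2) then 1 else 0 := by
  have hD : ∀ c d, u1 (!A1) c < u1 A1 d := fun c d => hdom c trivial d trivial
  refine ⟨fun h => h.eq_indicator_of_absDom hD hBR (ACR_fst_subset_of_absDomIn1 hdom), ?_⟩
  rintro rfl
  exact iceCond_of_isNash (Bool.apply_le_of_apply_not_lt (f := (u1 · A2)) (hD A2 A2))
    (Bool.apply_le_of_apply_not_lt hBR)

lemma iceCond_ACR_iff_of_absDomIn2 {A1 A2 : Bool} (hdom : AbsDomIn2 u2 Set.univ A2 (!A2))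
    (hBR : u1 (!A1) A2 < u1 A1 A2) (α : Bool × Bool → ℝ) :
    IceCond u1 u2 (ACR u1 u2) α ↔ α = fun a => if a = (A1, A2) then 1 else 0 := by
  have hD : ∀ c d, u2 c (!A2) < u2 d A2 := fun c d => hdom c trivial d trivial
  refine ⟨fun h => ?_, ?_⟩
  · have hswap := h.swap.eq_indicator_of_absDom hD hBR (ACR_snd_subset_of_absDomIn2 hdom)
    funext p
    simpa [Prod.swap_eq_iff_eq_swap] using congrFun hswap p.swap
  · rintro rfl
    exact iceCond_of_isNash (Bool.apply_le_of_apply_not_lt hBR)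
      (Bool.apply_le_of_apply_not_lt (f := u2 A1) (hD A1 A1))

end

/-- Generic 2×2 environment: in each player's payoff matrix all four entries are
distinct (no repeated payoffs). If some player has an absolutely dominated action,
then the unique ICE with respect to `A^CR` is the point mass on the profile where
that player plays his absolutely dominant action and the opponent plays the unique
best response to it. -/
theorem stmt18 (u1 u2 : Bool → Bool → ℝ)
    (hg1 : Function.Injective (fun p : Bool × Bool => u1 p.1 p.2))
    (hg2 : Function.Injective (fun p : Bool × Bool => u2 p.1 p.2))
    (hdom : (∃ a b : Bool, AbsDomIn1 u1 Set.univ a b)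
          ∨ (∃ a b : Bool, AbsDomIn2 u2 Set.univ a b)) :
    ∃ astar : Bool × Bool,
      (((∃ b1, AbsDomIn1 u1 Set.univ astar.1 b1) ∧
          (∀ b2, u2 astar.1 b2 ≤ u2 astar.1 astar.2)) ∨
       ((∃ b2, AbsDomIn2 u2 Set.univ astar.2 b2) ∧
          (∀ b1, u1 b1 astar.2 ≤ u1 astar.1 astar.2))) ∧
      ∀ α : Bool × Bool → ℝ,
        IceCond u1 u2 (ACR u1 u2) α ↔ α = fun a => if a = astar then 1 else 0 := by
  rcases hdom with ⟨A1, b, hdom⟩ | ⟨A2, b, hdom⟩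
  · obtain rfl := hdom.eq_not Set.univ_nonempty
    obtain ⟨A2, hBR⟩ : ∃ a2, u2 A1 (!a2) < u2 A1 a2 :=
      Bool.exists_apply_not_lt_of_injective (hg2.comp (Prod.mk_right_injective A1))
    exact ⟨(A1, A2), Or.inl ⟨⟨_, hdom⟩, Bool.apply_le_of_apply_not_lt hBR⟩,
      iceCond_ACR_iff_of_absDomIn1 hdom hBR⟩
  · obtain rfl := hdom.eq_not Set.univ_nonempty
    obtain ⟨A1, hBR⟩ : ∃ a1, u1 (!a1) A2 < u1 a1 A2 :=
      Bool.exists_apply_not_lt_of_injective (hg1.comp (Prod.mk_left_injective A2))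
    exact ⟨(A1, A2), Or.inr ⟨⟨_, hdom⟩, Bool.apply_le_of_apply_not_lt (f := (u1 · A2)) hBR⟩,
      iceCond_ACR_iff_of_absDomIn2 hdom hBR⟩
end
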